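/- Fix an integer g ≥ 2 and equip ℤ³ with the symmetric bilinear form B((r,a,s),(r',a',s')) := (2g−2)·a·a' − r·s' − r'·s. Then B is nondegenerate, the vectors (0,1,1−g) and (0,1,0) are primitive, the divisibility of (0,1,1−g) equals g−1, the divisibility of (0,1,0) equals 2g−2, and these two divisibilities are distinct. -/
import Mathlib


/-- The Mukai pairing on the extended Néron–Severi lattice `ℤ³ = H⁰ ⊕ ℤH ⊕ H⁴` of a
K3 surface of Picard rank 1 with `H² = 2g-2`:
`B((r,a,s),(r',a',s')) = (2g-2)·a·a' - r·s' - r'·s`. -/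
def mukaiB (g : ℤ) : (ℤ × ℤ × ℤ) →ₗ[ℤ] (ℤ × ℤ × ℤ) →ₗ[ℤ] ℤ where
  toFun x :=
    { toFun := fun y => (2 * g - 2) * x.2.1 * y.2.1 - x.1 * y.2.2 - y.1 * x.2.2
      map_add' := by
        intro y z
        simp only [Prod.fst_add, Prod.snd_add]
        ring
      map_smul' := by
        intro c y
        simp only [Prod.smul_fst, Prod.smul_snd, smul_eq_mul, RingHom.id_apply]
        ring }
  map_add' := by
    intro x z
    refine LinearMap.ext fun y => ?_
    simp only [Prod.fst_add, Prod.snd_add, LinearMap.coe_mk, AddHom.coe_mk,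
      LinearMap.add_apply]
    ring
  map_smul' := by
    intro c x
    refine LinearMap.ext fun y => ?_
    simp only [Prod.smul_fst, Prod.smul_snd, smul_eq_mul, RingHom.id_apply,
      LinearMap.coe_mk, AddHom.coe_mk, LinearMap.smul_apply]
    ring


noncomputable section

def pmap (c : ℤ) : (ℤ × ℤ × ℤ) →ₗ[ℤ] (ℤ × ℤ) where
  toFun x := (x.1, x.2.2 - c * x.2.1)
  map_add' := by intro x y; simp only [Prod.fst_add, Prod.snd_add, Prod.mk_add_mk]; ring_nf
  map_smul' := by intro r x; simp only [Prod.smul_fst, Prod.smul_snd, smul_eq_mul,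
    RingHom.id_apply, Prod.smul_mk]; ring_nf

theorem ker_pmap (c : ℤ) : LinearMap.ker (pmap c) = Submodule.span ℤ {((0,1,c) : ℤ × ℤ × ℤ)} := by
  ext x
  simp only [LinearMap.mem_ker, pmap, LinearMap.coe_mk, AddHom.coe_mk, Prod.mk_eq_zero,
    Submodule.mem_span_singleton, sub_eq_zero]
  constructor
  · rintro ⟨h1, h2⟩
    exact ⟨x.2.1, by ext <;> simp [h1, h2.symm, mul_comm]⟩
  · rintro ⟨k, rfl⟩
    simp [mul_comm]

theorem surj_pmap (c : ℤ) : Function.Surjective (pmap c) := by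
  intro ⟨a, b⟩
  exact ⟨(a, 0, b), by simp [pmap]⟩

theorem prim (c : ℤ) :
    NoZeroSMulDivisors ℤ ((ℤ × ℤ × ℤ) ⧸ Submodule.span ℤ {((0, 1, c) : ℤ × ℤ × ℤ)}) := by
  have e := (Submodule.quotEquivOfEq _ _ (ker_pmap c).symm).trans
    ((pmap c).quotKerEquivOfSurjective (surj_pmap c))
  exact Function.Injective.noZeroSMulDivisors e e.injective (map_zero e) (map_smul e)

/-- Fix `g ≥ 2` and equip `ℤ³` with the symmetric bilinear form
`B((r,a,s),(r',a',s')) = (2g-2)·a·a' - r·s' - r'·s`. Then `B` is nondegenerate, the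
vectors `(0,1,1-g)` and `(0,1,0)` are primitive, the divisibility of `(0,1,1-g)` equals
`g-1`, the divisibility of `(0,1,0)` equals `2g-2`, and these divisibilities are
distinct. -/
theorem statement_13 (g : ℤ) (hg : 2 ≤ g) :
    Function.Injective (mukaiB g) ∧
      NoZeroSMulDivisors ℤ
        ((ℤ × ℤ × ℤ) ⧸ Submodule.span ℤ {((0, 1, 1 - g) : ℤ × ℤ × ℤ)}) ∧
      NoZeroSMulDivisors ℤ
        ((ℤ × ℤ × ℤ) ⧸ Submodule.span ℤ {((0, 1, 0) : ℤ × ℤ × ℤ)}) ∧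
      LinearMap.range (mukaiB g (0, 1, 1 - g)) = Submodule.span ℤ {(g - 1 : ℤ)} ∧
      LinearMap.range (mukaiB g (0, 1, 0)) = Submodule.span ℤ {(2 * g - 2 : ℤ)} ∧
      g - 1 ≠ 2 * g - 2 := by
  
  refine ⟨?_, prim (1 - g), prim 0, ?_, ?_, by omega⟩
  · intro x y h
    have h1 := congrArg (fun f => f (0,0,1) : ((ℤ×ℤ×ℤ) →ₗ[ℤ] ℤ) → ℤ) h
    have h2 := congrArg (fun f => f (1,0,0) : ((ℤ×ℤ×ℤ) →ₗ[ℤ] ℤ) → ℤ) h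
    have h3 := congrArg (fun f => f (0,1,0) : ((ℤ×ℤ×ℤ) →ₗ[ℤ] ℤ) → ℤ) h
    simp only [mukaiB, LinearMap.coe_mk, AddHom.coe_mk] at h1 h2 h3
    have hg' : (2 * g - 2) ≠ 0 := by omega
    have e1 : x.2.1 = y.2.1 := by
      have := mul_left_cancel₀ hg' (by linarith [h3] : (2*g-2) * x.2.1 = (2*g-2) * y.2.1)
      exact this
    ext
    · linarith [h1]
    · exact e1
    · linarith [h2]
  · ext z
    simp only [LinearMap.mem_range, mukaiB, LinearMap.coe_mk, AddHom.coe_mk,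
      Submodule.mem_span_singleton, smul_eq_mul]
    constructor
    · rintro ⟨y, rfl⟩
      exact ⟨y.1 + 2 * y.2.1, by ring⟩
    · rintro ⟨k, rfl⟩
      exact ⟨(k, 0, 0), by ring⟩
  · ext z
    simp only [LinearMap.mem_range, mukaiB, LinearMap.coe_mk, AddHom.coe_mk,
      Submodule.mem_span_singleton, smul_eq_mul]
    constructor
    · rintro ⟨y, rfl⟩
      exact ⟨y.2.1, by ring⟩
    · rintro ⟨k, rfl⟩
      exact ⟨(0, k, 0), by ring⟩
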